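/- Let S be a finite nonempty set, c a cost function, {i,j,k} ∈ binom(S,3), and R ⊆ S such that {i,j} ∈ δ(R) and {i,k} ∈ δ(R). If 2·c_{ijk}^− + 2·c_{ij}^− + 2·c_{ik}^− + c_{jk}^− − Σ_{{p,q,r}∈binom(S,3)} c_{pqr}^+ − Σ_{{p,q}∈binom(S,2)} c_{pq}^+ + min{ Σ_{{p,q}∈binom({i,j,k},2)} c_{pq}·x_{pq} : x ∈ X_{{i,j,k}}, x_{ij}·x_{ik}·x_{jk} = 0 } ≥ Σ_{{p,q,r}∈T_{δ(R)}} c_{pqr}^− + Σ_{{p,q}∈δ(R)} c_{pq}^−, then there exists an optimal solution x* of min_{x∈X_S} φ_c(x) such that x*_{ij}·x*_{ik}·x*_{jk} = 1. -/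

import Mathlib

open Finset

/-- `binom(S,2)`: the set of 2-element subsets (unordered pairs) of the ground set. -/
def pairs (V : Type*) [Fintype V] [DecidableEq V] : Finset (Finset V) :=
  (univ : Finset V).powersetCard 2

/-- `binom(S,3)`: the set of 3-element subsets (unordered triples) of the ground set. -/
def triples (V : Type*) [Fintype V] [DecidableEq V] : Finset (Finset V) :=
  (univ : Finset V).powersetCard 3

/-- The feasible set `X_S`: maps `x : binom(S,2) → {0,1}` satisfying the triangle
inequalities `x_{pq} + x_{qr} - x_{pr} ≤ 1` for all pairwise distinct `p, q, r`. -/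
def feasible {V : Type*} [Fintype V] [DecidableEq V] (x : Finset V → ℝ) : Prop :=
  (∀ e ∈ pairs V, x e = 0 ∨ x e = 1) ∧
    ∀ p q r : V, p ≠ q → q ≠ r → p ≠ r →
      x {p, q} + x {q, r} - x {p, r} ≤ 1

/-- The cubic objective
`φ_c(x) = Σ_{{p,q,r}} c_{pqr} x_{pq} x_{pr} x_{qr} + Σ_{{p,q}} c_{pq} x_{pq} + c_∅`. -/
def obj {V : Type*} [Fintype V] [DecidableEq V] (c x : Finset V → ℝ) : ℝ :=
  ∑ t ∈ triples V, c t * ∏ e ∈ t.powersetCard 2, x e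
    + ∑ e ∈ pairs V, c e * x e + c ∅

/-- `δ(R)`: the pairs having exactly one element in `R`. -/
def cut {V : Type*} [Fintype V] [DecidableEq V] (R : Finset V) : Finset (Finset V) :=
  (pairs V).filter fun e => (e ∩ R).card = 1

/-- `T_{P'}`: the triples having some 2-element subset in `P'`. -/
def Tof {V : Type*} [Fintype V] [DecidableEq V] (P' : Finset (Finset V)) :
    Finset (Finset V) :=
  (triples V).filter fun t => ∃ e ∈ t.powersetCard 2, e ∈ P'

/-- The feasible set `X_T` for a subset `T` of the ground set: maps
`x : binom(T,2) → {0,1}` satisfying the triangle inequalities within `T`. -/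
def feasibleOn {V : Type*} [DecidableEq V] (T : Finset V) (x : Finset V → ℝ) : Prop :=
  (∀ e ∈ T.powersetCard 2, x e = 0 ∨ x e = 1) ∧
    ∀ p ∈ T, ∀ q ∈ T, ∀ r ∈ T, p ≠ q → q ≠ r → p ≠ r →
      x {p, q} + x {q, r} - x {p, r} ≤ 1

/-!
Start from an optimal partition `x`. If it does not already join `i, j, k`, merge the clusters
of `i`, `j` and `k` into one cluster. The merged partition `y` only switches cost terms on;
each switch costs at most `c⁺`, except that the triple `ijk` and its three pairs are switched on
for sure, at cost `c_{ijk}` and `c_e (1 - x_e)`. Hence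
`φ(y) - φ(x) ≤ Σ c⁺ - c_{ijk}⁻ - Σ_{e ⊆ ijk} (c_e⁻ + c_e x_e)`, and the hypothesis makes this
nonpositive: its right-hand side is at least `c_{ijk}⁻ + c_{ij}⁻ + c_{ik}⁻`, because
`ijk ∈ T_{δ(R)}` and `ij, ik ∈ δ(R)`. So `y` is optimal as well.
-/

lemma sum_le_sum_add_sum_sub_of_le_on_sdiff {ι β : Type*} [DecidableEq ι] [AddCommGroup β]
    [PartialOrder β] [IsOrderedAddMonoid β] {s u : Finset ι} (hu : u ⊆ s) {f g : ι → β}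
    (h : ∀ a ∈ s \ u, f a ≤ g a) : ∑ a ∈ s, f a ≤ ∑ a ∈ s, g a + ∑ a ∈ u, (f a - g a) := by
  rw [← sum_sdiff hu (f := f), ← sum_sdiff hu (f := g), sum_sub_distrib, add_assoc,
    add_sub_cancel]
  exact add_le_add_left (sum_le_sum h) _

lemma mul_le_max_zero {α : Type*} [Ring α] [LinearOrder α] [IsStrictOrderedRing α] {c d : α}
    (hd : d ∈ Set.Icc 0 1) : c * d ≤ max c 0 := by
  rcases le_total c 0 with hc | hc
  · exact (mul_nonpos_of_nonpos_of_nonneg hc hd.1).trans (le_max_right c 0)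
  · exact (mul_le_of_le_one_right hc hd.2).trans (le_max_left c 0)

section TwoSubsets

variable {α : Type*} [DecidableEq α] {i j k : α}

lemma powersetCard_two_triple (hij : i ≠ j) (hik : i ≠ k) (hjk : j ≠ k) :
    ({i, j, k} : Finset α).powersetCard 2 = {{i, j}, {i, k}, {j, k}} := by
  have hk : ({k} : Finset α).powersetCard 2 = ∅ := powersetCard_eq_empty.2 (by simp)
  ext
  simp [powersetCard_succ_insert, powersetCard_one, hk, hij, hik, hjk]
  tauto

lemma pair_ne_pair_left (hij : i ≠ j) (hjk : j ≠ k) : ({i, j} : Finset α) ≠ {i, k} :=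
  ne_of_mem_of_not_mem' (mem_insert_of_mem (mem_singleton_self j)) (by simp [hij.symm, hjk])

lemma pair_ne_pair_right (hij : i ≠ j) (hik : i ≠ k) (b : α) : ({i, b} : Finset α) ≠ {j, k} :=
  ne_of_mem_of_not_mem' (mem_insert_self i {b}) (by simp [hij, hik])

@[to_additive]
lemma prod_powersetCard_two_triple {β : Type*} [CommMonoid β] (f : Finset α → β)
    (hij : i ≠ j) (hik : i ≠ k) (hjk : j ≠ k) :
    ∏ e ∈ ({i, j, k} : Finset α).powersetCard 2, f e = f {i, j} * f {i, k} * f {j, k} := by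
  rw [powersetCard_two_triple hij hik hjk, prod_insert, prod_pair (pair_ne_pair_right hij hik k),
    mul_assoc]
  simp only [mem_insert, mem_singleton, not_or]
  exact ⟨pair_ne_pair_left hij hjk, pair_ne_pair_right hij hik j⟩

end TwoSubsets

section Partitions

variable {V : Type*} [Fintype V] [DecidableEq V] {x y : Finset V → ℝ}

lemma mem_pairs_iff {e : Finset V} : e ∈ pairs V ↔ e.card = 2 := by
  simp [pairs, mem_powersetCard]

lemma pair_mem_pairs {p q : V} (h : p ≠ q) : ({p, q} : Finset V) ∈ pairs V :=
  mem_pairs_iff.2 (card_pair h)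

lemma mem_pairs_of_mem_powersetCard {t e : Finset V} (he : e ∈ t.powersetCard 2) :
    e ∈ pairs V :=
  mem_pairs_iff.2 (mem_powersetCard.1 he).2

lemma powersetCard_two_subset_pairs (t : Finset V) : t.powersetCard 2 ⊆ pairs V :=
  fun _ => mem_pairs_of_mem_powersetCard

lemma triple_mem_triples {i j k : V} (hij : i ≠ j) (hik : i ≠ k) (hjk : j ≠ k) :
    ({i, j, k} : Finset V) ∈ triples V := by
  simp [triples, mem_powersetCard, card_insert_of_notMem, hij, hik, hjk]

lemma feasible.mem_Icc (hx : feasible x) {e : Finset V} (he : e ∈ pairs V) :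
    x e ∈ Set.Icc 0 1 := by
  rcases hx.1 e he with h | h <;> simp [h]

lemma feasible.trans (hx : feasible x) {p q r : V} (hpq : p ≠ q) (hqr : q ≠ r) (hpr : p ≠ r)
    (h₁ : x {p, q} = 1) (h₂ : x {q, r} = 1) : x {p, r} = 1 := by
  have := hx.2 p q r hpq hqr hpr
  rcases hx.1 _ (pair_mem_pairs hpr) with h | h <;> linarith

lemma feasible_of_trans (h01 : ∀ e ∈ pairs V, x e = 0 ∨ x e = 1)
    (htrans : ∀ p q r : V, p ≠ q → q ≠ r → p ≠ r → x {p, q} = 1 → x {q, r} = 1 →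
      x {p, r} = 1) :
    feasible x := by
  refine ⟨h01, fun p q r hpq hqr hpr => ?_⟩
  rcases h01 _ (pair_mem_pairs hpq) with h₁ | h₁ <;>
    rcases h01 _ (pair_mem_pairs hqr) with h₂ | h₂ <;>
    rcases h01 _ (pair_mem_pairs hpr) with h₃ | h₃ <;> try linarith
  linarith [htrans p q r hpq hqr hpr h₁ h₂]

lemma feasible.feasibleOn (hx : feasible x) (T : Finset V) : feasibleOn T x :=
  ⟨fun _ he => hx.1 _ (mem_pairs_of_mem_powersetCard he), fun p _ q _ r _ => hx.2 p q r⟩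

lemma feasible.congr (hx : feasible x) (h : ∀ e ∈ pairs V, x e = y e) : feasible y := by
  refine ⟨fun e he => h e he ▸ hx.1 e he, fun p q r hpq hqr hpr => ?_⟩
  rw [← h _ (pair_mem_pairs hpq), ← h _ (pair_mem_pairs hqr), ← h _ (pair_mem_pairs hpr)]
  exact hx.2 p q r hpq hqr hpr

lemma feasible_zero : feasible fun _ : Finset V => (0 : ℝ) :=
  ⟨fun _ _ => Or.inl rfl, fun _ _ _ _ _ _ => by simp⟩

lemma obj_congr (c : Finset V → ℝ) (h : ∀ e ∈ pairs V, x e = y e) : obj c x = obj c y := by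
  unfold obj
  congr 2
  · refine sum_congr rfl fun t _ => ?_
    rw [prod_congr rfl fun e he => h e (mem_pairs_of_mem_powersetCard he)]
  · exact sum_congr rfl fun e he => by rw [h e he]

/- A feasible `x` is determined, on pairs, by the set of pairs it joins, so only finitely many
objective values occur. -/
lemma exists_optimal (c : Finset V → ℝ) :
    ∃ x, feasible x ∧ ∀ y, feasible y → obj c x ≤ obj c y := by
  classical
  let ind (P : Finset (Finset V)) : Finset V → ℝ := Set.indicator ↑P 1
  have hind : ∀ y, feasible y → ∀ e ∈ pairs V, ind ((pairs V).filter (y · = 1)) e = y e := by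
    intro y hy e he
    rcases hy.1 e he with h | h <;> simp [ind, he, h]
  let F := (pairs V).powerset.filter fun P => feasible (ind P)
  have hF : F.Nonempty := ⟨∅, by simpa [F, ind] using feasible_zero⟩
  obtain ⟨P, hP, hmin⟩ := exists_min_image F (fun P => obj c (ind P)) hF
  refine ⟨ind P, (mem_filter.1 hP).2, fun y hy => ?_⟩
  calc obj c (ind P) ≤ obj c (ind ((pairs V).filter (y · = 1))) :=
        hmin _ (mem_filter.2 ⟨mem_powerset.2 (filter_subset _ _),
          hy.congr fun e he => (hind y hy e he).symm⟩)
    _ = obj c y := obj_congr c (hind y hy)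

lemma obj_le_obj_add (c : Finset V → ℝ) (hx : feasible x) (hy : feasible y)
    (hxy : ∀ e ∈ pairs V, x e ≤ y e) {U P : Finset (Finset V)} (hU : U ⊆ triples V)
    (hP : P ⊆ pairs V) :
    obj c y ≤ obj c x
      + (∑ t ∈ triples V, max (c t) 0 + ∑ t ∈ U,
          (c t * (∏ e ∈ t.powersetCard 2, y e - ∏ e ∈ t.powersetCard 2, x e) - max (c t) 0))
      + (∑ e ∈ pairs V, max (c e) 0 + ∑ e ∈ P, (c e * (y e - x e) - max (c e) 0)) := by
  have hx₀ : ∀ t : Finset V, ∀ e ∈ t.powersetCard 2, 0 ≤ x e :=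
    fun t e he => (hx.mem_Icc (mem_pairs_of_mem_powersetCard he)).1
  have hprod : ∀ t : Finset V,
      ∏ e ∈ t.powersetCard 2, y e - ∏ e ∈ t.powersetCard 2, x e ∈ Set.Icc 0 1 := fun t =>
    ⟨sub_nonneg.2 (prod_le_prod (hx₀ t) fun e he => hxy e (mem_pairs_of_mem_powersetCard he)),
      (sub_le_self _ (prod_nonneg (hx₀ t))).trans (prod_le_one
        (fun e he => (hy.mem_Icc (mem_pairs_of_mem_powersetCard he)).1)
        (fun e he => (hy.mem_Icc (mem_pairs_of_mem_powersetCard he)).2))⟩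
  have hT := sum_le_sum_add_sum_sub_of_le_on_sdiff hU
    (f := fun t => c t * (∏ e ∈ t.powersetCard 2, y e - ∏ e ∈ t.powersetCard 2, x e))
    (g := fun t => max (c t) 0) fun t _ => mul_le_max_zero (hprod t)
  have hE := sum_le_sum_add_sum_sub_of_le_on_sdiff hP (f := fun e => c e * (y e - x e))
    (g := fun e => max (c e) 0) fun e he => mul_le_max_zero
      ⟨sub_nonneg.2 (hxy e (mem_sdiff.1 he).1),
        by linarith [(hx.mem_Icc (mem_sdiff.1 he).1).1, (hy.mem_Icc (mem_sdiff.1 he).1).2]⟩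
  unfold obj
  simp only [mul_sub, sum_sub_distrib] at hT hE ⊢
  linarith

end Partitions

section Merge

variable {V : Type*} {x : Finset V → ℝ}

def clusters [DecidableEq V] (x : Finset V → ℝ) (A : Finset V) : Set V :=
  {p | ∃ a ∈ A, p = a ∨ x {p, a} = 1}

lemma subset_clusters [DecidableEq V] (A : Finset V) : ↑A ⊆ clusters x A :=
  fun a ha => ⟨a, ha, Or.inl rfl⟩

lemma feasible.mem_clusters [Fintype V] [DecidableEq V] (hx : feasible x) {A : Finset V}
    {p q : V} (hpq : p ≠ q) (h : x {p, q} = 1) (hq : q ∈ clusters x A) :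
    p ∈ clusters x A := by
  obtain ⟨a, ha, rfl | hqa⟩ := hq
  · exact ⟨q, ha, Or.inr h⟩
  refine ⟨a, ha, ?_⟩
  by_cases hpa : p = a
  · exact Or.inl hpa
  by_cases hqa' : q = a
  · exact Or.inr (hqa' ▸ h)
  exact Or.inr (hx.trans hpq hqa' hpa h hqa)

open Classical in
/-- Joins all points of `D` into a single cluster, keeping every pair already joined by `x`. -/
noncomputable def merge (x : Finset V → ℝ) (D : Set V) : Finset V → ℝ :=
  fun e => if x e = 1 ∨ ↑e ⊆ D then 1 else 0

lemma merge_eq_zero_or_eq_one (D : Set V) (e : Finset V) :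
    merge x D e = 0 ∨ merge x D e = 1 := by
  unfold merge
  split_ifs <;> simp

lemma merge_eq_one_iff {D : Set V} {e : Finset V} :
    merge x D e = 1 ↔ x e = 1 ∨ ↑e ⊆ D := by
  unfold merge
  split_ifs with h <;> simp [h]

lemma merge_clusters_pair_eq_one [DecidableEq V] {A : Finset V} {p q : V} (hp : p ∈ A)
    (hq : q ∈ A) : merge x (clusters x A) {p, q} = 1 :=
  merge_eq_one_iff.2 <| Or.inr <| by
    simpa [Set.insert_subset_iff] using ⟨subset_clusters A hp, subset_clusters A hq⟩

variable [Fintype V] [DecidableEq V]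

lemma feasible.le_merge (hx : feasible x) (D : Set V) {e : Finset V} (he : e ∈ pairs V) :
    x e ≤ merge x D e := by
  rcases hx.1 e he with h | h
  · rcases merge_eq_zero_or_eq_one D e with h' | h' <;> linarith
  · rw [h, merge_eq_one_iff.2 (Or.inl h)]

/-- `D` has to be a union of clusters of `x`, otherwise merging breaks transitivity. -/
lemma feasible_merge (hx : feasible x) {D : Set V}
    (hD : ∀ p q, p ≠ q → x {p, q} = 1 → q ∈ D → p ∈ D) : feasible (merge x D) := by
  refine feasible_of_trans (fun e _ => merge_eq_zero_or_eq_one D e)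
    fun p q r hpq hqr hpr h₁ h₂ => ?_
  simp only [merge_eq_one_iff, coe_pair, Set.insert_subset_iff, Set.singleton_subset_iff]
    at h₁ h₂ ⊢
  rcases h₁ with h₁ | ⟨hp, hq⟩ <;> rcases h₂ with h₂ | ⟨hq', hr⟩
  · exact Or.inl (hx.trans hpq hqr hpr h₁ h₂)
  · exact Or.inr ⟨hD p q hpq h₁ hq', hr⟩
  · exact Or.inr ⟨hp, hD r q hqr.symm (pair_comm q r ▸ h₂) hq⟩
  · exact Or.inr ⟨hp, hr⟩

end Merge

section Triplet

variable {V : Type*} [Fintype V] [DecidableEq V] {x y : Finset V → ℝ} {i j k : V}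

lemma obj_add_le_of_joins_triplet (c : Finset V → ℝ) (hx : feasible x) (hy : feasible y)
    (hxy : ∀ e ∈ pairs V, x e ≤ y e) (hij : i ≠ j) (hik : i ≠ k) (hjk : j ≠ k)
    (hyij : y {i, j} = 1) (hyik : y {i, k} = 1) (hyjk : y {j, k} = 1)
    (hx₀ : x {i, j} * x {i, k} * x {j, k} = 0) :
    obj c y + max (-c {i, j, k}) 0
        + (max (-c {i, j}) 0 + max (-c {i, k}) 0 + max (-c {j, k}) 0)
        + ∑ e ∈ ({i, j, k} : Finset V).powersetCard 2, c e * x e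
      ≤ obj c x + ∑ t ∈ triples V, max (c t) 0 + ∑ e ∈ pairs V, max (c e) 0 := by
  have h := obj_le_obj_add c hx hy hxy
    (singleton_subset_iff.2 (triple_mem_triples hij hik hjk))
    (powersetCard_two_subset_pairs {i, j, k})
  simp only [sum_singleton, prod_powersetCard_two_triple _ hij hik hjk,
    sum_powersetCard_two_triple _ hij hik hjk, hx₀, hyij, hyik, hyjk] at h ⊢
  have := max_zero_sub_max_neg_zero_eq_self (c {i, j, k})
  have := max_zero_sub_max_neg_zero_eq_self (c {i, j})
  have := max_zero_sub_max_neg_zero_eq_self (c {i, k})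
  have := max_zero_sub_max_neg_zero_eq_self (c {j, k})
  linarith

lemma max_neg_triplet_le_sum_cut (c : Finset V → ℝ) (hij : i ≠ j) (hik : i ≠ k) (hjk : j ≠ k)
    {R : Finset V} (hR1 : ({i, j} : Finset V) ∈ cut R) (hR2 : ({i, k} : Finset V) ∈ cut R) :
    max (-c {i, j, k}) 0 + (max (-c {i, j}) 0 + max (-c {i, k}) 0)
      ≤ ∑ t ∈ Tof (cut R), max (-c t) 0 + ∑ e ∈ cut R, max (-c e) 0 := by
  have hmem : {i, j, k} ∈ Tof (cut R) := mem_filter.2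
    ⟨triple_mem_triples hij hik hjk, {i, j}, by simp [powersetCard_two_triple hij hik hjk], hR1⟩
  refine add_le_add (single_le_sum (f := fun t => max (-c t) 0)
    (fun t _ => le_max_right _ 0) hmem) ?_
  rw [← sum_pair (f := fun e => max (-c e) 0) (pair_ne_pair_left hij hjk)]
  exact sum_le_sum_of_subset_of_nonneg (insert_subset hR1 (singleton_subset_iff.2 hR2))
    fun e _ _ => le_max_right _ 0

end Triplet

theorem triplet_join_persistency_general {V : Type*} [Fintype V] [DecidableEq V]
    (c : Finset V → ℝ) (i j k : V) (hij : i ≠ j) (hik : i ≠ k) (hjk : j ≠ k)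
    (R : Finset V)
    (hR1 : ({i, j} : Finset V) ∈ cut R) (hR2 : ({i, k} : Finset V) ∈ cut R)
    (h : ∀ x : Finset V → ℝ, feasibleOn {i, j, k} x →
        x {i, j} * x {i, k} * x {j, k} = 0 →
        2 * max (-(c {i, j, k})) 0 + 2 * max (-(c {i, j})) 0 + 2 * max (-(c {i, k})) 0
          + max (-(c {j, k})) 0
          - ∑ t ∈ triples V, max (c t) 0 - ∑ e ∈ pairs V, max (c e) 0
          + ∑ e ∈ ({i, j, k} : Finset V).powersetCard 2, c e * x e
        ≥ ∑ t ∈ Tof (cut R), max (-(c t)) 0 + ∑ e ∈ cut R, max (-(c e)) 0) :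
    ∃ xstar : Finset V → ℝ, feasible xstar ∧
      (∀ x : Finset V → ℝ, feasible x → obj c xstar ≤ obj c x) ∧
      xstar {i, j} * xstar {i, k} * xstar {j, k} = 1 := by
  obtain ⟨x, hx, hopt⟩ := exists_optimal c
  by_cases hjoined : x {i, j} * x {i, k} * x {j, k} = 1
  · exact ⟨x, hx, hopt, hjoined⟩
  have hx₀ : x {i, j} * x {i, k} * x {j, k} = 0 := by
    rcases hx.1 _ (pair_mem_pairs hij) with h₁ | h₁ <;>
      rcases hx.1 _ (pair_mem_pairs hik) with h₂ | h₂ <;>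
      rcases hx.1 _ (pair_mem_pairs hjk) with h₃ | h₃ <;> simp_all
  set y := merge x (clusters x {i, j, k})
  have hy : feasible y := feasible_merge hx fun _ _ => hx.mem_clusters
  have hjoin : ∀ {p q}, p ∈ ({i, j, k} : Finset V) → q ∈ ({i, j, k} : Finset V) →
      y {p, q} = 1 := merge_clusters_pair_eq_one
  have hyx := obj_add_le_of_joins_triplet c hx hy (fun e => hx.le_merge _) hij hik hjk
    (hjoin (by simp) (by simp)) (hjoin (by simp) (by simp)) (hjoin (by simp) (by simp)) hx₀
  refine ⟨y, hy, fun z hz => ?_, by simp [hjoin]⟩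
  linarith [h x (hx.feasibleOn _) hx₀, max_neg_triplet_le_sum_cut c hij hik hjk hR1 hR2,
    hopt z hz]

/--
Let `S` be a finite nonempty set, `c` a cost function,
`{i,j,k} ∈ binom(S,3)`, and `R ⊆ S` such that `{i,j} ∈ δ(R)` and `{i,k} ∈ δ(R)`.  If
`2c_{ijk}⁻ + 2c_{ij}⁻ + 2c_{ik}⁻ + c_{jk}⁻ − Σ_{{p,q,r} ∈ binom(S,3)} c_{pqr}⁺
  − Σ_{{p,q} ∈ binom(S,2)} c_{pq}⁺
  + min{ Σ_{{p,q} ∈ binom({i,j,k},2)} c_{pq} x_{pq} : x ∈ X_{{i,j,k}}, x_{ij} x_{ik} x_{jk} = 0 }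
  ≥ Σ_{{p,q,r} ∈ T_{δ(R)}} c_{pqr}⁻ + Σ_{{p,q} ∈ δ(R)} c_{pq}⁻`,
then there exists an optimal solution `x*` of `min_{x ∈ X_S} φ_c(x)` such that
`x*_{ij} · x*_{ik} · x*_{jk} = 1`.  (The hypothesis involving the minimum is stated
equivalently by quantifying over all `x ∈ X_{{i,j,k}}` with `x_{ij} x_{ik} x_{jk} = 0`.)
-/
theorem triplet_join_persistency {V : Type*} [Fintype V] [DecidableEq V] [Nonempty V]
    (c : Finset V → ℝ) (i j k : V) (hij : i ≠ j) (hik : i ≠ k) (hjk : j ≠ k)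
    (R : Finset V)
    (hR1 : ({i, j} : Finset V) ∈ cut R) (hR2 : ({i, k} : Finset V) ∈ cut R)
    (h : ∀ x : Finset V → ℝ, feasibleOn {i, j, k} x →
        x {i, j} * x {i, k} * x {j, k} = 0 →
        2 * max (-(c {i, j, k})) 0 + 2 * max (-(c {i, j})) 0 + 2 * max (-(c {i, k})) 0
          + max (-(c {j, k})) 0
          - ∑ t ∈ triples V, max (c t) 0 - ∑ e ∈ pairs V, max (c e) 0
          + ∑ e ∈ ({i, j, k} : Finset V).powersetCard 2, c e * x e
        ≥ ∑ t ∈ Tof (cut R), max (-(c t)) 0 + ∑ e ∈ cut R, max (-(c e)) 0) :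
    ∃ xstar : Finset V → ℝ, feasible xstar ∧
      (∀ x : Finset V → ℝ, feasible x → obj c xstar ≤ obj c x) ∧
      xstar {i, j} * xstar {i, k} * xstar {j, k} = 1 :=
  triplet_join_persistency_general c i j k hij hik hjk R hR1 hR2 h
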